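/- Let p be a prime, n > 0 an integer, and f ∈ ℤ_p[[X]]. Let Q = Σ_{i=1}^{p} C(p,i) X^{i-1} ∈ ℤ_p[[X]], so that X·Q = (1+X)^p - 1. Suppose x_0, x_1, ..., x_{p-1} ∈ ℤ_p[[X]] satisfy Q^n · f = Σ_{i=0}^{p-1} (1+X)^i · x_i((1+X)^p - 1). Then x_0 belongs to the ideal of ℤ_p[[X]] generated by the elements X^j · p^[(n(p-1)-jp-1)/(p-1)] for 0 ≤ j ≤ [n(p-1)/p]. -/

import Mathlib

/-!
Write `φ f = f((1 + X) ^ p - 1)`. Since `φ f ≡ f(X ^ p) mod p`, every power series is, modulo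
any power of `p`, uniquely of the form `∑_{r < p} X ^ r φ(D r)`. In these coordinates
multiplication by `Q = φ(X) / X` is `E ↦ (C(p, r+1) E 0 + X E (r+1))_r`. Give `p` the weight
`p - 1` and `X` the weight `p`: as `p ∣ C(p, r+1)` for `r + 1 < p`, each multiplication by `Q`
raises the weight of every coordinate by `p - 1`, so the coordinates of `Q ^ n f` satisfy
`wt (D r) ≥ n (p - 1) - r`. Binomial inversion gives `x₀ = ∑ (-1) ^ r D r`, of weight at least
`(n - 1)(p - 1)`, and the generators of the ideal are exactly the monomials of that weight.
-/

open PowerSeries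

/-- Substitution of a power series `g` with zero constant term into a power series `f`:
the coefficient of `X^d` in `f(g)` is `∑_{n ≤ d} (coeff n f) · (coeff d g^n)`.
(When the constant term of `g` vanishes, `coeff d (g^n) = 0` for `n > d`, so this is
the usual substitution `f ↦ f(g)`.) -/
noncomputable def PowerSeries.subst' {R : Type*} [CommRing R] (g f : R⟦X⟧) : R⟦X⟧ :=
  PowerSeries.mk fun d => ∑ n ∈ Finset.range (d + 1), coeff n f * coeff d (g ^ n)

open Finset

namespace PowerSeries

variable {R : Type*} [CommRing R]

theorem coeff_subst_eq_sum_range {g : R⟦X⟧} (hg : constantCoeff g = 0) (f : R⟦X⟧)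
    (d : ℕ) :
    coeff d (subst g f) = ∑ n ∈ range (d + 1), coeff n f * coeff d (g ^ n) := by
  rw [coeff_subst' (.of_constantCoeff_zero' hg)]
  refine finsum_eq_sum_of_support_subset _ fun n hn => ?_
  simp only [Function.mem_support, coe_range, Set.mem_Iio, smul_eq_mul] at hn ⊢
  by_contra! hdn
  refine hn ?_
  rw [coeff_of_lt_order d
    ((Nat.cast_lt.mpr hdn).trans_le (le_order_pow_of_constantCoeff_eq_zero n hg)), mul_zero]

theorem subst'_eq_subst {g : R⟦X⟧} (hg : constantCoeff g = 0) (f : R⟦X⟧) :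
    subst' g f = subst g f := by
  ext d
  rw [subst', coeff_mk, coeff_subst_eq_sum_range hg]

theorem C_dvd_iff {c : R} {f : R⟦X⟧} : C c ∣ f ↔ ∀ d, c ∣ coeff d f := by
  refine ⟨fun ⟨w, hw⟩ d => ⟨coeff d w, by rw [hw, coeff_C_mul]⟩, fun h => ?_⟩
  choose w hw using h
  exact ⟨mk w, by ext d; rw [coeff_C_mul, coeff_mk, hw]⟩

theorem C_dvd_subst_sub_subst {a b : R⟦X⟧} (ha : constantCoeff a = 0)
    (hb : constantCoeff b = 0) {c : R} (hab : C c ∣ a - b) (f : R⟦X⟧) :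
    C c ∣ subst a f - subst b f := by
  refine C_dvd_iff.mpr fun d => ?_
  rw [map_sub, coeff_subst_eq_sum_range ha, coeff_subst_eq_sum_range hb, ← sum_sub_distrib]
  refine dvd_sum fun n _ => ?_
  rw [← mul_sub, ← map_sub]
  exact (C_dvd_iff.mp (hab.trans (sub_dvd_pow_sub_pow a b n)) d).mul_left _

section Expand

variable (m : ℕ) (hm : m ≠ 0)

theorem coeff_sum_X_pow_mul_expand (h : ℕ → R⟦X⟧) (k : ℕ) :
    coeff k (∑ r ∈ range m, X ^ r * expand m hm (h r)) = coeff (k / m) (h (k % m)) := by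
  have hmod : k % m < m := Nat.mod_lt k (Nat.pos_of_ne_zero hm)
  rw [map_sum, sum_eq_single_of_mem (k % m) (mem_range.mpr hmod)]
  · rw [coeff_X_pow_mul', if_pos (Nat.mod_le k m),
      show k - k % m = m * (k / m) by have := Nat.div_add_mod k m; omega, coeff_expand_mul]
  · intro r hr hne
    rw [coeff_X_pow_mul']
    split_ifs with hrk
    · refine coeff_expand_of_not_dvd m hm _ fun ⟨q, hq⟩ => hne ?_
      rw [show k = m * q + r by omega, Nat.mul_add_mod, Nat.mod_eq_of_lt (mem_range.mp hr)]
    · rfl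

theorem sum_X_pow_mul_expand_digits (g : R⟦X⟧) :
    ∑ r ∈ range m, X ^ r * expand m hm (mk fun t => coeff (m * t + r) g) = g := by
  ext k
  rw [coeff_sum_X_pow_mul_expand, coeff_mk, Nat.div_add_mod]

theorem C_dvd_of_C_dvd_sum_X_pow_mul_expand {c : R} {h : ℕ → R⟦X⟧}
    (hc : C c ∣ ∑ r ∈ range m, X ^ r * expand m hm (h r)) {r : ℕ} (hr : r < m) :
    C c ∣ h r := by
  refine C_dvd_iff.mpr fun t => ?_
  have := C_dvd_iff.mp hc (m * t + r)
  rwa [coeff_sum_X_pow_mul_expand, Nat.mul_add_mod, Nat.mod_eq_of_lt hr,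
    Nat.mul_add_div (Nat.pos_of_ne_zero hm), Nat.div_eq_of_lt hr, add_zero] at this

end Expand

theorem mem_span_X_pow_mul_C_pow {c : R} {g : R⟦X⟧} {e : ℕ → ℕ} {J : ℕ}
    (hdvd : ∀ j < J, c ^ e j ∣ coeff j g) (hJ : e J = 0) :
    g ∈ Ideal.span ((fun j => X ^ j * C c ^ e j) '' Set.Iic J) := by
  have hgen : ∀ j ≤ J,
      X ^ j * C c ^ e j ∈ Ideal.span ((fun j => X ^ j * C c ^ e j) '' Set.Iic J) :=
    fun j hj => Ideal.subset_span ⟨j, hj, rfl⟩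
  rw [eq_X_pow_mul_shift_add_trunc J g, trunc_apply]
  refine Ideal.add_mem _ ?_ ?_
  · simpa [hJ] using Ideal.mul_mem_right _ _ (hgen J le_rfl)
  · rw [← Polynomial.coeToPowerSeries.ringHom_apply, map_sum]
    refine Ideal.sum_mem _ fun j hj => ?_
    obtain ⟨w, hw⟩ := hdvd j (mem_Ico.mp hj).2
    rw [Polynomial.coeToPowerSeries.ringHom_apply, Polynomial.coe_monomial,
      monomial_eq_C_mul_X_pow, hw, map_mul, map_pow]
    convert Ideal.mul_mem_right (C w) _ (hgen j (mem_Ico.mp hj).2.le) using 1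
    ring

/-- The power series of weight at least `N` when `c` has weight `a` and `X` has weight `b`:
over a discrete valuation ring with uniformizer `c`, `a v(coeff j g) + b j ≥ N` for all `j`. -/
def weightIdeal (c : R) (a b : ℕ) (N : ℤ) : Ideal R⟦X⟧ where
  carrier := {g | ∀ j e : ℕ, (a * e + b * j : ℤ) < N → c ^ (e + 1) ∣ coeff j g}
  zero_mem' _ _ _ := by simp
  add_mem' hf hg j e h := by rw [map_add]; exact dvd_add (hf j e h) (hg j e h)
  smul_mem' f g hg j e h := by
    rw [smul_eq_mul, coeff_mul]
    refine dvd_sum fun q hq => (hg q.2 e ?_).mul_left _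
    have : (b * q.2 : ℤ) ≤ b * j := by
      gcongr; exact Finset.HasAntidiagonal.antidiagonal.snd_le hq
    omega

section WeightIdeal

variable {c : R} {a b : ℕ} {N : ℤ} {g : R⟦X⟧}

theorem weightIdeal_antitone : Antitone (weightIdeal c a b) :=
  fun _ _ hMN _ hg j e h => hg j e (h.trans_le hMN)

theorem weightIdeal_eq_top (hN : N ≤ 0) : weightIdeal c a b N = ⊤ :=
  Ideal.eq_top_iff_one _ |>.mpr fun j e h => absurd h (not_lt.mpr (hN.trans (by positivity)))

theorem C_mul_mem_weightIdeal (hg : g ∈ weightIdeal c a b N) :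
    C c * g ∈ weightIdeal c a b (N + a) := by
  rintro j (_ | e) h
  · exact ⟨coeff j g, by rw [coeff_C_mul, zero_add, pow_one]⟩
  · rw [coeff_C_mul, pow_succ']
    exact mul_dvd_mul_left c (hg j e (by push_cast at h; linarith))

theorem X_mul_mem_weightIdeal (hg : g ∈ weightIdeal c a b N) :
    X * g ∈ weightIdeal c a b (N + b) := by
  rintro (_ | j) e h
  · simp
  · rw [coeff_succ_X_mul]
    exact hg j e (by push_cast at h; linarith)

theorem mem_weightIdeal_of_C_pow_dvd {k : ℕ} (hg : C c ^ k ∣ g) :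
    g ∈ weightIdeal c a b (k * a) := by
  intro j e h
  rw [← map_pow] at hg
  refine (pow_dvd_pow c ?_).trans (C_dvd_iff.mp hg j)
  by_contra! hk
  have : (k * a : ℤ) ≤ a * e := by rw [mul_comm]; gcongr; omega
  have : (0 : ℤ) ≤ b * j := by positivity
  omega

theorem pow_dvd_coeff_of_mem_weightIdeal (hg : g ∈ weightIdeal c a b N) {j e : ℕ}
    (h : (a * e + b * j : ℤ) < N + a) : c ^ e ∣ coeff j g := by
  rcases e with _ | e
  · rw [pow_zero]; exact one_dvd _
  · exact hg j e (by push_cast at h; linarith)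

end WeightIdeal

end PowerSeries

theorem one_add_pow_eq_sum_range_choose {S : Type*} [CommSemiring S] (y : S) {i N : ℕ}
    (hi : i < N) : (1 + y) ^ i = ∑ r ∈ range N, (i.choose r : S) * y ^ r := by
  rw [add_comm, add_pow]
  refine (sum_congr rfl fun r _ => by rw [one_pow, mul_one, mul_comm]).trans
    (sum_subset (range_subset_range.mpr hi) fun r _ hr => ?_)
  rw [Nat.choose_eq_zero_of_lt (by simpa using hr), Nat.cast_zero, zero_mul]

namespace SharpEstimate

variable {R : Type*} [CommRing R] (p : ℕ)

noncomputable def Q : R⟦X⟧ := ∑ i ∈ range p, (p.choose (i + 1) : R⟦X⟧) * X ^ i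

theorem X_mul_Q : X * Q p = (1 + X : R⟦X⟧) ^ p - 1 := by
  rw [one_add_pow_eq_sum_range_choose X (Nat.lt_succ_self p), sum_range_succ', Q, mul_sum]
  simp only [Nat.choose_zero_right, Nat.cast_one, pow_zero, mul_one, add_sub_cancel_right]
  exact sum_congr rfl fun i _ => by ring

theorem constantCoeff_one_add_X_pow_sub_one : constantCoeff ((1 + X : R⟦X⟧) ^ p - 1) = 0 := by
  simp

/-- The Frobenius lift `φ : f(X) ↦ f((1 + X) ^ p - 1)`. -/
noncomputable def phi : R⟦X⟧ →ₐ[R] R⟦X⟧ :=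
  substAlgHom (.of_constantCoeff_zero' (constantCoeff_one_add_X_pow_sub_one p))

theorem phi_apply (f : R⟦X⟧) : phi p f = subst ((1 + X : R⟦X⟧) ^ p - 1) f := by
  rw [phi, coe_substAlgHom]

theorem phi_X : phi p X = (1 + X : R⟦X⟧) ^ p - 1 := by
  rw [phi_apply, subst_X (.of_constantCoeff_zero' (constantCoeff_one_add_X_pow_sub_one p))]

noncomputable def frobSum : (ℕ → R⟦X⟧) →+ R⟦X⟧ :=
  AddMonoidHom.mk' (fun D => ∑ r ∈ range p, X ^ r * phi p (D r)) fun D E => by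
    simp only [Pi.add_apply, map_add, mul_add, sum_add_distrib]

theorem frobSum_apply (D : ℕ → R⟦X⟧) :
    frobSum p D = ∑ r ∈ range p, X ^ r * phi p (D r) := rfl

theorem frobSum_natCast_mul (D : ℕ → R⟦X⟧) :
    frobSum p (fun r => (p : R⟦X⟧) * D r) = p * frobSum p D := by
  rw [← nsmul_eq_mul, ← map_nsmul]
  congr 1
  ext1 r
  rw [Pi.smul_apply, nsmul_eq_mul]

theorem frobSum_sum_choose (x : Fin p → R⟦X⟧) :
    frobSum p (fun r => ∑ i : Fin p, ((i : ℕ).choose r : R⟦X⟧) * x i) =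
      ∑ i : Fin p, (1 + X) ^ (i : ℕ) * phi p (x i) := by
  simp_rw [frobSum_apply, map_sum, map_mul, map_natCast, mul_sum]
  rw [sum_comm]
  refine sum_congr rfl fun i _ => ?_
  rw [one_add_pow_eq_sum_range_choose X i.is_lt, sum_mul]
  exact sum_congr rfl fun r _ => by ring

noncomputable def mulQCoords (E : ℕ → R⟦X⟧) (r : ℕ) : R⟦X⟧ :=
  (p.choose (r + 1) : R⟦X⟧) * E 0 + X * E (r + 1)

theorem Q_mul_frobSum {E : ℕ → R⟦X⟧} (hE : E p = 0) :
    Q p * frobSum p E = frobSum p (mulQCoords p E) := by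
  have hshift : frobSum p E = phi p (E 0) + X * ∑ r ∈ range p, X ^ r * phi p (E (r + 1)) := by
    have := sum_range_succ' (fun r => X ^ r * phi p (E r)) p
    rw [sum_range_succ, hE, map_zero, mul_zero, add_zero] at this
    rw [frobSum_apply, this, mul_sum, add_comm, pow_zero, one_mul]
    exact congrArg₂ _ rfl (sum_congr rfl fun r _ => by ring)
  have hcoords : frobSum p (mulQCoords p E) = Q p * phi p (E 0)
      + ((1 + X) ^ p - 1) * ∑ r ∈ range p, X ^ r * phi p (E (r + 1)) := by
    simp only [frobSum_apply, mulQCoords, map_add, map_mul, map_natCast, phi_X, Q, mul_add,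
      sum_add_distrib, sum_mul, mul_sum]
    exact congrArg₂ _ (sum_congr rfl fun r _ => by ring) (sum_congr rfl fun r _ => by ring)
  rw [hcoords, hshift, ← X_mul_Q]
  ring

variable [hp : Fact p.Prime]

theorem natCast_dvd_phi_sub_expand (f : R⟦X⟧) :
    (p : R⟦X⟧) ∣ phi p f - expand p hp.out.ne_zero f := by
  obtain ⟨u, hu⟩ := exists_add_pow_prime_eq hp.out (X : R⟦X⟧) 1
  rw [phi_apply, expand_apply, ← map_natCast C]
  refine C_dvd_subst_sub_subst (by simp) (by simp [hp.out.ne_zero]) ⟨X * u, ?_⟩ f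
  rw [map_natCast, add_comm, hu]
  ring

theorem natCast_dvd_frobSum_sub (D : ℕ → R⟦X⟧) :
    (p : R⟦X⟧) ∣ frobSum p D - ∑ r ∈ range p, X ^ r * expand p hp.out.ne_zero (D r) := by
  rw [frobSum_apply, ← sum_sub_distrib]
  exact dvd_sum fun r _ => by
    rw [← mul_sub]; exact (natCast_dvd_phi_sub_expand p (D r)).mul_left _

theorem exists_pow_dvd_sub_frobSum (a : ℕ) (g : R⟦X⟧) :
    ∃ D : ℕ → R⟦X⟧, (∀ r, p ≤ r → D r = 0) ∧
      (p : R⟦X⟧) ^ a ∣ g - frobSum p D := by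
  induction a generalizing g with
  | zero => exact ⟨0, fun _ _ => rfl, by rw [pow_zero]; exact one_dvd _⟩
  | succ a ih =>
    set G : ℕ → R⟦X⟧ := fun r => if r < p then mk fun t => coeff (p * t + r) g else 0
    have hG : g = ∑ r ∈ range p, X ^ r * expand p hp.out.ne_zero (G r) := by
      conv_lhs => rw [← sum_X_pow_mul_expand_digits p hp.out.ne_zero g]
      exact sum_congr rfl fun r hr => by simp [G, mem_range.mp hr]
    obtain ⟨u, hu⟩ : (p : R⟦X⟧) ∣ g - frobSum p G := by
      rw [← dvd_neg, neg_sub, hG]; exact natCast_dvd_frobSum_sub p G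
    obtain ⟨D, hD, v, hv⟩ := ih u
    refine ⟨G + fun r => (p : R⟦X⟧) * D r, fun r hr => ?_, v, ?_⟩
    · simp [G, hD r hr, not_lt.mpr hr]
    · rw [map_add, frobSum_natCast_mul, pow_succ', sub_add_eq_sub_sub, hu, ← mul_sub, hv,
        mul_assoc]

theorem pow_dvd_of_pow_dvd_frobSum [IsDomain R] [CharZero R] (a : ℕ) {D : ℕ → R⟦X⟧}
    (hD : (p : R⟦X⟧) ^ a ∣ frobSum p D) {r : ℕ} (hr : r < p) :
    (p : R⟦X⟧) ^ a ∣ D r := by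
  induction a generalizing D with
  | zero => rw [pow_zero]; exact one_dvd _
  | succ a ih =>
    have hdvd : ∀ r < p, (p : R⟦X⟧) ∣ D r := fun r hr => by
      rw [← map_natCast C] at hD ⊢
      refine C_dvd_of_C_dvd_sum_X_pow_mul_expand p hp.out.ne_zero ?_ hr
      rw [← dvd_sub_right ((dvd_pow_self _ (Nat.succ_ne_zero a)).trans hD), map_natCast]
      exact natCast_dvd_frobSum_sub p D
    choose! D' hD' using hdvd
    have hp0 : (p : R⟦X⟧) ≠ 0 := by
      rw [← map_natCast C, Ne, map_eq_zero_iff C C_injective]; exact_mod_cast hp.out.ne_zero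
    have hsum : frobSum p D = p * frobSum p D' := by
      rw [← frobSum_natCast_mul, frobSum_apply, frobSum_apply]
      exact sum_congr rfl fun r hr => by rw [hD' r (mem_range.mp hr)]
    rw [hD' r hr, pow_succ']
    rw [hsum, pow_succ'] at hD
    exact mul_dvd_mul_left _ (ih ((mul_dvd_mul_iff_left hp0).mp hD))

theorem mulQCoords_mem_weightIdeal {E : ℕ → R⟦X⟧} {k : ℕ}
    (hE : ∀ r < p, E r ∈ weightIdeal (p : R) (p - 1) p (k * (p - 1 : ℕ) - r)) (hEp : E p = 0)
    {r : ℕ} (hr : r < p) :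
    mulQCoords p E r ∈ weightIdeal (p : R) (p - 1) p ((k + 1) * (p - 1 : ℕ) - r) := by
  have hE0 := hE 0 hp.out.pos
  rw [Nat.cast_zero, sub_zero] at hE0
  refine add_mem ?_ ?_
  · rcases Nat.lt_or_ge (r + 1) p with h | h
    · obtain ⟨c, hc⟩ := hp.out.dvd_choose_self r.succ_ne_zero h
      rw [hc, Nat.cast_mul, mul_assoc, ← map_natCast C]
      refine weightIdeal_antitone ?_ (C_mul_mem_weightIdeal (Ideal.mul_mem_left _ _ hE0))
      linarith
    · rw [show r + 1 = p by omega, Nat.choose_self, Nat.cast_one, one_mul]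
      refine weightIdeal_antitone ?_ hE0
      rw [show ((p - 1 : ℕ) : ℤ) = r by omega]
      linarith
  · rcases Nat.lt_or_ge (r + 1) p with h | h
    · refine weightIdeal_antitone ?_ (X_mul_mem_weightIdeal (hE (r + 1) h))
      rw [show ((p - 1 : ℕ) : ℤ) = p - 1 by omega]
      push_cast
      linarith
    · rw [show r + 1 = p by omega, hEp, mul_zero]
      exact zero_mem _

theorem mem_weightIdeal_of_pow_dvd_frobSum_sub [IsDomain R] [CharZero R] (g : R⟦X⟧) (m : ℕ)
    {D : ℕ → R⟦X⟧} (hD : (p : R⟦X⟧) ^ m ∣ frobSum p D - Q p ^ m * g) :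
    ∀ r < p, D r ∈ weightIdeal (p : R) (p - 1) p (m * (p - 1 : ℕ) - r) := by
  induction m generalizing D with
  | zero => simp [weightIdeal_eq_top]
  | succ m ih =>
    intro r hr
    -- precision `p ^ (m + 1)` rather than `p ^ m`, so that `D - mulQCoords p E` is negligible
    obtain ⟨E, hE, hgE⟩ := exists_pow_dvd_sub_frobSum p (m + 1) (Q p ^ m * g)
    have hEm := ih (by rw [← dvd_neg, neg_sub]; exact (pow_dvd_pow _ m.le_succ).trans hgE)
    have hdiff : (p : R⟦X⟧) ^ (m + 1) ∣ frobSum p (D - mulQCoords p E) := by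
      rw [map_sub, ← Q_mul_frobSum p (hE p le_rfl),
        show frobSum p D - Q p * frobSum p E
          = frobSum p D - Q p ^ (m + 1) * g + Q p * (Q p ^ m * g - frobSum p E) by ring]
      exact dvd_add hD (hgE.mul_left _)
    have herr : C (p : R) ^ (m + 1) ∣ D r - mulQCoords p E r := by
      rw [map_natCast]; exact pow_dvd_of_pow_dvd_frobSum p (m + 1) hdiff hr
    rw [← add_sub_cancel (mulQCoords p E r) (D r)]
    refine add_mem (mulQCoords_mem_weightIdeal p hEm (hE p le_rfl) hr) ?_
    refine weightIdeal_antitone ?_ (mem_weightIdeal_of_C_pow_dvd herr)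
    push_cast
    linarith

theorem mem_span_of_mem_weightIdeal {n : ℕ} {g : R⟦X⟧}
    (hg : g ∈ weightIdeal (p : R) (p - 1) p (n * (p - 1 : ℕ) - (p - 1 : ℕ))) :
    g ∈ Ideal.span ((fun j : ℕ => X ^ j *
      (p : R⟦X⟧) ^ ((((n : ℤ) * ((p : ℤ) - 1) - j * p - 1) / ((p : ℤ) - 1)).toNat)) ''
        Set.Iic (n * (p - 1) / p)) := by
  have hq : ((p - 1 : ℕ) : ℤ) = p - 1 := by have := hp.out.one_lt; omega
  have hq0 : (0 : ℤ) < p - 1 := by have := hp.out.one_lt; omega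
  have hJ := Nat.div_add_mod (n * (p - 1)) p
  have hJ' := Nat.mod_lt (n * (p - 1)) hp.out.pos
  zify [hp.out.one_le] at hJ hJ'
  simp only [← map_natCast (C : R →+* R⟦X⟧) p]
  refine mem_span_X_pow_mul_C_pow (fun j hj => pow_dvd_coeff_of_mem_weightIdeal hg ?_) ?_
  · have hpj : p * (j + 1) ≤ n * (p - 1) :=
      (Nat.le_div_iff_mul_le hp.out.pos).mp hj |>.trans_eq' (mul_comm _ _)
    zify [hp.out.one_le] at hpj
    rw [hq, Int.toNat_eq_max]
    rcases le_total ((n * ((p : ℤ) - 1) - j * p - 1) / (p - 1)) 0 with h | h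
    · rw [max_eq_right h]; linarith
    · rw [max_eq_left h]
      have := Int.ediv_mul_le (n * ((p : ℤ) - 1) - j * p - 1) hq0.ne'
      linarith
  · refine Int.toNat_eq_zero.mpr (Int.lt_add_one_iff.mp ((Int.ediv_lt_iff_lt_mul hq0).mpr ?_))
    push_cast [hp.out.one_le]
    linarith

end SharpEstimate

theorem Finset.sum_range_neg_one_pow_mul_sum_choose {S : Type*} [CommRing S] {N : ℕ} [NeZero N]
    (x : Fin N → S) :
    ∑ r ∈ range N, (-1) ^ r * ∑ i : Fin N, ((i : ℕ).choose r : S) * x i = x 0 := by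
  simp_rw [mul_sum, sum_comm (s := range N), ← mul_assoc, ← sum_mul]
  simp_rw [mul_comm ((-1 : S) ^ _), ← one_add_pow_eq_sum_range_choose (-1 : S) (Fin.is_lt _),
    add_neg_cancel, zero_pow_eq, ite_mul, one_mul, zero_mul, Fin.val_eq_zero_iff]
  exact Fintype.sum_ite_eq' 0 x

open SharpEstimate in
theorem sharp_estimate_II_general (p : ℕ) [hp : Fact p.Prime] (n : ℕ)
    (f : PowerSeries ℤ_[p]) (x : Fin p → PowerSeries ℤ_[p])
    (hx : (∑ i ∈ Finset.range p, (p.choose (i + 1) : PowerSeries ℤ_[p]) * X ^ i) ^ n * f =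
      ∑ i : Fin p, (1 + X) ^ (i : ℕ) * PowerSeries.subst' ((1 + X) ^ p - 1) (x i)) :
    x 0 ∈ Ideal.span ((fun j : ℕ => X ^ j *
        (p : PowerSeries ℤ_[p]) ^ ((((n : ℤ) * ((p : ℤ) - 1) - j * p - 1) /
          ((p : ℤ) - 1)).toNat)) ''
      (Set.Iic (n * (p - 1) / p))) := by
  have hcoords := mem_weightIdeal_of_pow_dvd_frobSum_sub p f n
    (D := fun r => ∑ i : Fin p, ((i : ℕ).choose r : ℤ_[p]⟦X⟧) * x i) (by
      simp_rw [frobSum_sum_choose, phi_apply,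
        ← subst'_eq_subst (constantCoeff_one_add_X_pow_sub_one p), ← hx, Q, sub_self]
      exact dvd_zero _)
  refine mem_span_of_mem_weightIdeal p ?_
  rw [← sum_range_neg_one_pow_mul_sum_choose x]
  refine sum_mem fun r hr => Ideal.mul_mem_left _ _ (weightIdeal_antitone ?_ (hcoords r ?_))
  all_goals have := mem_range.mp hr; omega

/-- **Sharp Estimate II** (Theorem 3.6): with `Q = ∑_{i=1}^{p} C(p,i) X^{i-1}`
(so `X·Q = (1+X)^p - 1`), if `Q^n f = ∑_{i<p} (1+X)^i xᵢ((1+X)^p - 1)` in `ℤ_p[[X]]`,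
then `x₀ = π^n ψ(π^{-n} f)` lies in the ideal generated by the elements
`X^j p^[(n(p-1)-jp-1)/(p-1)]` for `0 ≤ j ≤ [n(p-1)/p]`. -/
theorem sharp_estimate_II (p : ℕ) [hp : Fact p.Prime] (n : ℕ) (hn : 0 < n)
    (f : PowerSeries ℤ_[p]) (x : Fin p → PowerSeries ℤ_[p])
    (hx : (∑ i ∈ Finset.range p, (p.choose (i + 1) : PowerSeries ℤ_[p]) * X ^ i) ^ n * f =
      ∑ i : Fin p, (1 + X) ^ (i : ℕ) * PowerSeries.subst' ((1 + X) ^ p - 1) (x i)) :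
    x 0 ∈ Ideal.span ((fun j : ℕ => X ^ j *
        (p : PowerSeries ℤ_[p]) ^ ((((n : ℤ) * ((p : ℤ) - 1) - j * p - 1) /
          ((p : ℤ) - 1)).toNat)) ''
      (Set.Iic (n * (p - 1) / p))) :=
  sharp_estimate_II_general p (hp := hp) n f x hx
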